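/- arXiv:2411.02392 — 3 statements merged into one kernel-verified Lean document; each statement's English description precedes it below -/
import Mathlib

section
/- Let s ∈ ℝ and let d : Σ^* → [0,∞) be an s-supergale with d(λ) ≤ 1. Then for every n ∈ ℕ, the number of strings x ∈ Σ^n with d(x) > 1 is strictly less than 2^{s·n}. -/
open Filter MeasureTheory

lemma supergale_sum_le (s : ℝ) (d : List Bool → ℝ)
    (hsuper : ∀ w, d (w ++ [false]) + d (w ++ [true]) ≤ 2 ^ s * d w)
    (hinit : d [] ≤ 1) (n : ℕ) :
    ∑ v : Fin n → Bool, d (List.ofFn v) ≤ 2 ^ (s * n) := by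
  induction n with
  | zero => simpa using hinit
  | succ n ih =>
    have hsnoc : ∀ (v : Fin n → Bool) (b : Bool),
        List.ofFn (Fin.snoc v b) = List.ofFn v ++ [b] := by
      intro v b
      rw [List.ofFn_succ']
      simp [Fin.snoc_castSucc, Fin.snoc_last, List.concat_eq_append]
    have key : ∑ v : Fin (n+1) → Bool, d (List.ofFn v)
        = ∑ v : Fin n → Bool, (d (List.ofFn v ++ [false]) + d (List.ofFn v ++ [true])) := by
      rw [← Fintype.sum_equiv (Fin.snocEquiv (fun _ => Bool))
        (fun p => d (List.ofFn (Fin.snoc p.2 p.1))) (fun v => d (List.ofFn v))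
        (fun p => by simp [Fin.snocEquiv])]
      rw [Fintype.sum_prod_type_right]
      refine Finset.sum_congr rfl fun v _ => ?_
      rw [Fintype.sum_bool, hsnoc, hsnoc, add_comm]
    rw [key]
    calc ∑ v : Fin n → Bool, (d (List.ofFn v ++ [false]) + d (List.ofFn v ++ [true]))
        ≤ ∑ v : Fin n → Bool, 2 ^ s * d (List.ofFn v) :=
          Finset.sum_le_sum (fun v _ => hsuper _)
      _ = 2 ^ s * ∑ v : Fin n → Bool, d (List.ofFn v) := by rw [Finset.mul_sum]
      _ ≤ 2 ^ s * 2 ^ (s * n) := by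
          exact mul_le_mul_of_nonneg_left ih (Real.rpow_nonneg (by norm_num) s)
      _ = 2 ^ (s * ((n+1 : ℕ) : ℝ)) := by
          rw [← Real.rpow_add (by norm_num : (0:ℝ) < 2)]
          push_cast
          ring_nf
  
/-- For an `s`-supergale `d` with `d(λ) ≤ 1`, the number of strings `x` of length `n`
with `d x > 1` is strictly less than `2^{s n}`. -/
theorem supergale_count_success_lt
    (s : ℝ) (d : List Bool → ℝ) (hnonneg : ∀ w, 0 ≤ d w)
    (hsuper : ∀ w, d (w ++ [false]) + d (w ++ [true]) ≤ 2 ^ s * d w)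
    (hinit : d [] ≤ 1) (n : ℕ) :
    ({v : Fin n → Bool | 1 < d (List.ofFn v)}.ncard : ℝ) < 2 ^ (s * n) := by
  have hsum := supergale_sum_le s d hsuper hinit n
  set T : Finset (Fin n → Bool) := Finset.univ.filter (fun v => 1 < d (List.ofFn v)) with hT
  have hncard : {v : Fin n → Bool | 1 < d (List.ofFn v)}.ncard = T.card := by
    rw [Set.ncard_eq_toFinset_card']
    congr 1
    ext v
    simp [hT]
  rw [hncard]
  rcases T.eq_empty_or_nonempty with he | hne
  · rw [he]
    simpa using Real.rpow_pos_of_pos (by norm_num : (0:ℝ) < 2) (s * n)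
  · have h1 : (T.card : ℝ) = ∑ _v ∈ T, (1 : ℝ) := by simp
    have h2 : ∑ _v ∈ T, (1 : ℝ) < ∑ v ∈ T, d (List.ofFn v) :=
      Finset.sum_lt_sum_of_nonempty hne (fun v hv => by
        simpa [hT] using (Finset.mem_filter.mp hv).2)
    have h3 : ∑ v ∈ T, d (List.ofFn v) ≤ ∑ v : Fin n → Bool, d (List.ofFn v) :=
      Finset.sum_le_sum_of_subset_of_nonneg (Finset.subset_univ T)
        (fun v _ _ => hnonneg _)
    linarith
end

section
/- Let s'' and s̃ be reals with 0 ≤ s'' and s̃ > 2·s'', and let d̃ : Σ^* → [0,∞) be a martingale. Suppose X ∈ Σ^∞ satisfies limsup_{n→∞} d̃(X↾n) / 2^{(1−s'')·n} = ∞. Then there exist infinitely many n ∈ ℕ such that d̃(X↾2^n) > 2^{(1−s̃)·2^{n−1}}·d̃(X↾2^{n−1}). -/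
open Filter MeasureTheory

/-! If the doubling inequality failed from some stage `N` on, then `d(X↾2^j) / 2^{(1-s̃)2^j}`
would be non-increasing for `j ≥ N`, so `d(X↾2^j) ≤ C·2^{(1-s̃)2^j}`. A nonnegative martingale at
most doubles per bit, so for `2^j ≤ m < 2^{j+1}` this gives `d(X↾m) ≤ C·2^{m - s̃ 2^j}`, and
`s'' m ≤ 2 s'' 2^j ≤ s̃ 2^j` turns this into `d(X↾m) ≤ C·2^{(1-s'')m}`, contradicting the
unbounded limsup. -/

/-- The first `n` bits of an infinite binary sequence, as a finite string. -/
def pre (X : ℕ → Bool) (n : ℕ) : List Bool := List.ofFn (fun i : Fin n => X i)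

theorem pre_succ (X : ℕ → Bool) (n : ℕ) : pre X (n + 1) = pre X n ++ [X n] := by
  rw [pre, pre, List.ofFn_succ']
  simp

theorem martingale_append_singleton_le {d : List Bool → ℝ} (hnonneg : ∀ w, 0 ≤ d w)
    (hmart : ∀ w, d (w ++ [false]) + d (w ++ [true]) = 2 * d w) (w : List Bool) (b : Bool) :
    d (w ++ [b]) ≤ 2 * d w := by
  have := hmart w
  have := hnonneg (w ++ [false])
  have := hnonneg (w ++ [true])
  cases b <;> linarith

theorem le_two_pow_sub_mul_of_succ_le_two_mul {u : ℕ → ℝ} (hu : ∀ n, u (n + 1) ≤ 2 * u n)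
    {m n : ℕ} (hmn : m ≤ n) : u n ≤ 2 ^ (n - m) * u m := by
  obtain ⟨k, rfl⟩ := Nat.exists_eq_add_of_le hmn
  simpa using le_geom (u := fun i => u (m + i)) zero_le_two k fun i _ => hu (m + i)

theorem le_div_mul_rpow_of_dyadic_step {u : ℕ → ℝ} {r : ℝ} {N : ℕ}
    (hu : ∀ j ≥ N, u (2 ^ (j + 1)) ≤ 2 ^ (r * 2 ^ j) * u (2 ^ j)) :
    ∀ j ≥ N, u (2 ^ j) ≤ u (2 ^ N) / 2 ^ (r * 2 ^ N) * 2 ^ (r * 2 ^ j) := by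
  intro j hj
  induction j, hj using Nat.le_induction with
  | base => exact (div_mul_cancel₀ _ (by positivity)).ge
  | succ j hj ih =>
    have hsplit : (2 : ℝ) ^ (r * 2 ^ (j + 1)) = 2 ^ (r * 2 ^ j) * 2 ^ (r * 2 ^ j) := by
      rw [← Real.rpow_add two_pos]; ring_nf
    calc u (2 ^ (j + 1)) ≤ 2 ^ (r * 2 ^ j) * u (2 ^ j) := hu j hj
      _ ≤ 2 ^ (r * 2 ^ j) * (u (2 ^ N) / 2 ^ (r * 2 ^ N) * 2 ^ (r * 2 ^ j)) := by
        gcongr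
      _ = u (2 ^ N) / 2 ^ (r * 2 ^ N) * 2 ^ (r * 2 ^ (j + 1)) := by rw [hsplit]; ring

theorem le_mul_rpow_of_dyadic_le {u : ℕ → ℝ} (hu : ∀ n, u (n + 1) ≤ 2 * u n)
    {s t C : ℝ} (hC : 0 ≤ C) (hs : 0 ≤ s) (hst : 2 * s ≤ t) {N : ℕ}
    (hdyadic : ∀ j ≥ N, u (2 ^ j) ≤ C * 2 ^ ((1 - t) * 2 ^ j)) :
    ∀ m ≥ 2 ^ N, u m ≤ C * 2 ^ ((1 - s) * m) := by
  intro m hm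
  set j := Nat.log 2 m
  have hm0 : m ≠ 0 := (Nat.two_pow_pos N).trans_le hm |>.ne'
  have hjm : 2 ^ j ≤ m := Nat.pow_log_le_self 2 hm0
  have hmj : (m : ℝ) ≤ 2 * 2 ^ j := by
    exact_mod_cast (Nat.lt_pow_succ_log_self one_lt_two m).le.trans_eq (pow_succ' 2 j)
  have hexp : (↑(m - 2 ^ j) : ℝ) + (1 - t) * 2 ^ j ≤ (1 - s) * m := by
    push_cast [hjm]
    nlinarith [pow_pos (two_pos (α := ℝ)) j]
  calc u m ≤ 2 ^ (m - 2 ^ j) * u (2 ^ j) := le_two_pow_sub_mul_of_succ_le_two_mul hu hjm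
    _ ≤ 2 ^ (m - 2 ^ j) * (C * 2 ^ ((1 - t) * 2 ^ j)) :=
      mul_le_mul_of_nonneg_left (hdyadic j (Nat.le_log_of_pow_le one_lt_two hm)) (by positivity)
    _ = C * 2 ^ ((↑(m - 2 ^ j) : ℝ) + (1 - t) * 2 ^ j) := by
      rw [Real.rpow_add two_pos, Real.rpow_natCast]; ring
    _ ≤ C * 2 ^ ((1 - s) * m) :=
      mul_le_mul_of_nonneg_left (Real.rpow_le_rpow_of_exponent_le one_le_two hexp) hC

/-- If a martingale `d̃` satisfies `limsup d̃(X↾n)/2^{(1-s'')n} = ∞` with `s̃ > 2 s'' ≥ 0`, then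
for infinitely many `n`, `d̃(X↾2^n) > 2^{(1-s̃)2^{n-1}} d̃(X↾2^{n-1})`. -/
theorem martingale_doubling_growth
    (s'' st : ℝ) (h0 : 0 ≤ s'') (hst : 2 * s'' < st)
    (d : List Bool → ℝ) (hnonneg : ∀ w, 0 ≤ d w)
    (hmart : ∀ w, d (w ++ [false]) + d (w ++ [true]) = 2 * d w)
    (X : ℕ → Bool)
    (hX : ∀ C : ℝ, ∃ᶠ n in atTop, C < d (pre X n) / 2 ^ ((1 - s'') * (n : ℝ))) :
    ∃ᶠ n : ℕ in atTop,
      2 ^ ((1 - st) * (2 : ℝ) ^ (n - 1)) * d (pre X (2 ^ (n - 1))) < d (pre X (2 ^ n)) := by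
  by_contra hcon
  obtain ⟨N, hN⟩ := eventually_atTop.1 (not_frequently.1 hcon)
  set u : ℕ → ℝ := fun n => d (pre X n)
  have hu : ∀ n, u (n + 1) ≤ 2 * u n := fun n => by
    simpa only [u, pre_succ] using martingale_append_singleton_le hnonneg hmart _ (X n)
  have hstep : ∀ j ≥ N, u (2 ^ (j + 1)) ≤ 2 ^ ((1 - st) * 2 ^ j) * u (2 ^ j) := fun j hj => by
    simpa using not_lt.1 (hN (j + 1) (by omega))
  set C := u (2 ^ N) / 2 ^ ((1 - st) * 2 ^ N)
  have hbound : ∀ m ≥ 2 ^ N, u m ≤ C * 2 ^ ((1 - s'') * m) :=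
    le_mul_rpow_of_dyadic_le hu (div_nonneg (hnonneg _) (by positivity)) h0 hst.le
      (le_div_mul_rpow_of_dyadic_step hstep)
  obtain ⟨m, hm, hmN⟩ := ((hX C).and_eventually (eventually_ge_atTop (2 ^ N))).exists
  rw [lt_div_iff₀ (by positivity)] at hm
  exact (hbound m hmN).not_gt hm
end

section
/- Let s < 1 be real and let d : Σ^* → [0,∞) be an s-supergale. Then the success set S^∞(d) = {X ∈ Σ^∞ : limsup_{n→∞} d(X↾n) = ∞} is Borel and μ(S^∞(d)) = 0, where μ is the uniform fair-coin measure on Σ^∞. -/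
open Filter MeasureTheory
open scoped ENNReal

/-- The cylinder set of a finite binary string. -/
def cyl (w : List Bool) : Set (ℕ → Bool) := {X | pre X w.length = w}



def snocEquiv (n : ℕ) : ((Fin n → Bool) × Bool) ≃ (Fin (n+1) → Bool) where
  toFun := fun p => Fin.snoc p.1 p.2
  invFun := fun g => ⟨fun i => g i.castSucc, g (Fin.last n)⟩
  left_inv := by
    rintro ⟨h, b⟩
    simp [Fin.snoc_castSucc, Fin.snoc_last]
  right_inv := by
    intro g
    funext i
    refine Fin.lastCases ?_ ?_ i
    · simp
    · intro j; simp

lemma sum_bound (s : ℝ) (d : List Bool → ℝ) (hnonneg : ∀ w, 0 ≤ d w)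
    (hsuper : ∀ w, d (w ++ [false]) + d (w ++ [true]) ≤ 2 ^ s * d w) (n : ℕ) :
    ∑ g : Fin n → Bool, d (List.ofFn g) ≤ ((2:ℝ) ^ s) ^ n * d [] := by
  induction n with
  | zero => simp
  | succ n ih =>
    have hofFn : ∀ (h : Fin n → Bool) (b : Bool),
        List.ofFn (Fin.snoc h b : Fin (n+1) → Bool) = List.ofFn h ++ [b] := by
      intro h b
      rw [List.ofFn_succ']
      simp [List.concat_eq_append, Fin.snoc_castSucc, Fin.snoc_last]
    have hsum : ∑ g : Fin (n+1) → Bool, d (List.ofFn g)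
        = ∑ p : (Fin n → Bool) × Bool, d (List.ofFn (Fin.snoc p.1 p.2)) :=
      (Fintype.sum_equiv (snocEquiv n) (fun p => d (List.ofFn (Fin.snoc p.1 p.2)))
        (fun g => d (List.ofFn g)) (fun p => rfl)).symm
    rw [hsum, Fintype.sum_prod_type]
    have step : ∀ h : Fin n → Bool,
        ∑ b : Bool, d (List.ofFn (Fin.snoc h b : Fin (n+1) → Bool))
          ≤ 2 ^ s * d (List.ofFn h) := by
      intro h
      rw [Fintype.sum_bool, hofFn, hofFn]
      rw [add_comm]
      exact hsuper (List.ofFn h)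
    calc ∑ h : Fin n → Bool, ∑ b : Bool, d (List.ofFn (Fin.snoc h b : Fin (n+1) → Bool))
        ≤ ∑ h : Fin n → Bool, 2 ^ s * d (List.ofFn h) :=
          Finset.sum_le_sum fun h _ => step h
      _ = 2 ^ s * ∑ h : Fin n → Bool, d (List.ofFn h) := by rw [Finset.mul_sum]
      _ ≤ 2 ^ s * (((2:ℝ) ^ s) ^ n * d []) := by
          apply mul_le_mul_of_nonneg_left ih (Real.rpow_nonneg (by norm_num) s)
      _ = ((2:ℝ) ^ s) ^ (n+1) * d [] := by ring

lemma measurable_restrict (n : ℕ) :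
    Measurable (fun X : ℕ → Bool => (fun i : Fin n => X i)) :=
  measurable_pi_lambda _ fun i => measurable_pi_apply _

lemma measurableSet_B (d : List Bool → ℝ) (k : ℝ) (n : ℕ) :
    MeasurableSet {X : ℕ → Bool | k < d (pre X n)} := by
  have h : {X : ℕ → Bool | k < d (pre X n)} =
      (fun X : ℕ → Bool => (fun i : Fin n => X i)) ⁻¹'
        {g : Fin n → Bool | k < d (List.ofFn g)} := rfl
  rw [h]
  exact (measurable_restrict n) (Set.toFinite _).measurableSet

lemma measure_A_le (s : ℝ) (d : List Bool → ℝ) (hnonneg : ∀ w, 0 ≤ d w)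
    (hsuper : ∀ w, d (w ++ [false]) + d (w ++ [true]) ≤ 2 ^ s * d w)
    (μ : Measure (ℕ → Bool))
    (hμ : ∀ w : List Bool, μ (cyl w) = 1 / 2 ^ w.length) (n : ℕ) :
    μ {X : ℕ → Bool | 1 < d (pre X n)} ≤
      ENNReal.ofReal (d [] * ((2:ℝ) ^ (s-1)) ^ n) := by
  classical
  set W : Finset (Fin n → Bool) :=
    Finset.univ.filter (fun g => 1 < d (List.ofFn g)) with hW
  have hsub : {X : ℕ → Bool | 1 < d (pre X n)} ⊆ ⋃ g ∈ W, cyl (List.ofFn g) := by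
    intro X hX
    refine Set.mem_biUnion (show (fun i : Fin n => X i) ∈ W from ?_) ?_
    · simp only [hW, Finset.mem_filter, Finset.mem_univ, true_and]
      exact hX
    · show pre X (List.ofFn fun i : Fin n => X i).length = _
      rw [List.length_ofFn]
      rfl
  refine le_trans (measure_mono hsub) ?_
  refine le_trans (measure_biUnion_finset_le W _) ?_
  have hcyl : ∀ g ∈ W, μ (cyl (List.ofFn g)) = ENNReal.ofReal ((1:ℝ) / 2 ^ n) := by
    intro g _
    rw [hμ, List.length_ofFn]
    rw [ENNReal.ofReal_div_of_pos (by positivity)]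
    simp [ENNReal.ofReal_pow]
  rw [Finset.sum_congr rfl hcyl, Finset.sum_const, nsmul_eq_mul,
    ← ENNReal.ofReal_natCast, ← ENNReal.ofReal_mul (by positivity)]
  apply ENNReal.ofReal_le_ofReal
  have hcard : (W.card : ℝ) ≤ ((2:ℝ) ^ s) ^ n * d [] := by
    have h1 : (W.card : ℝ) = ∑ g ∈ W, (1:ℝ) := by simp
    have h2 : ∑ g ∈ W, (1:ℝ) ≤ ∑ g ∈ W, d (List.ofFn g) := by
      refine Finset.sum_le_sum fun g hg => ?_
      have := (Finset.mem_filter.mp hg).2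
      linarith
    have h3 : ∑ g ∈ W, d (List.ofFn g) ≤ ∑ g : Fin n → Bool, d (List.ofFn g) :=
      Finset.sum_le_sum_of_subset_of_nonneg (Finset.subset_univ W)
        (fun g _ _ => hnonneg _)
    calc (W.card : ℝ) = ∑ g ∈ W, (1:ℝ) := h1
      _ ≤ ∑ g ∈ W, d (List.ofFn g) := h2
      _ ≤ ∑ g : Fin n → Bool, d (List.ofFn g) := h3
      _ ≤ ((2:ℝ) ^ s) ^ n * d [] := sum_bound s d hnonneg hsuper n
  have hr : ((2:ℝ) ^ (s-1)) = (2:ℝ) ^ s / 2 := by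
    rw [Real.rpow_sub (by norm_num), Real.rpow_one]
  calc (W.card : ℝ) * (1 / 2 ^ n) ≤ (((2:ℝ) ^ s) ^ n * d []) * (1 / 2 ^ n) := by
        apply mul_le_mul_of_nonneg_right hcard (by positivity)
    _ = d [] * ((2:ℝ) ^ s / 2) ^ n := by
        rw [div_pow]; field_simp
    _ = d [] * ((2:ℝ) ^ (s-1)) ^ n := by rw [hr]

/-- For `s < 1`, the success set of an `s`-supergale is a Borel set of uniform measure zero. -/
theorem supergale_success_set_measure_zero
    (s : ℝ) (hs : s < 1)
    (d : List Bool → ℝ) (hnonneg : ∀ w, 0 ≤ d w)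
    (hsuper : ∀ w, d (w ++ [false]) + d (w ++ [true]) ≤ 2 ^ s * d w)
    (μ : Measure (ℕ → Bool))
    (hμ : ∀ w : List Bool, μ (cyl w) = 1 / 2 ^ w.length) :
    MeasurableSet {X : ℕ → Bool | ∀ C : ℝ, ∃ᶠ n in atTop, C < d (pre X n)} ∧
    μ {X : ℕ → Bool | ∀ C : ℝ, ∃ᶠ n in atTop, C < d (pre X n)} = 0 := by
  constructor
  · -- measurability
    have hEq : {X : ℕ → Bool | ∀ C : ℝ, ∃ᶠ n in atTop, C < d (pre X n)}
        = ⋂ k : ℕ, ⋂ N : ℕ, ⋃ n : ℕ, ⋃ _ : N ≤ n,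
            {X : ℕ → Bool | (k:ℝ) < d (pre X n)} := by
      ext X
      simp only [Set.mem_setOf_eq, Set.mem_iInter, Set.mem_iUnion]
      constructor
      · intro h k N
        obtain ⟨n, hn, hlt⟩ := frequently_atTop.mp (h k) N
        exact ⟨n, hn, hlt⟩
      · intro h C
        obtain ⟨k, hk⟩ := exists_nat_gt C
        refine frequently_atTop.mpr fun N => ?_
        obtain ⟨n, hn, hlt⟩ := h k N
        exact ⟨n, hn, lt_trans hk hlt⟩
    rw [hEq]
    exact MeasurableSet.iInter fun k => MeasurableSet.iInter fun N =>
      MeasurableSet.iUnion fun n => MeasurableSet.iUnion fun _ =>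
        measurableSet_B d _ n
  · -- measure zero
    set A : ℕ → Set (ℕ → Bool) := fun n => {X | 1 < d (pre X n)} with hA
    have hsub : {X : ℕ → Bool | ∀ C : ℝ, ∃ᶠ n in atTop, C < d (pre X n)}
        ⊆ limsup A atTop := by
      intro X hX
      exact mem_limsup_iff_frequently_mem.mpr (hX 1)
    refine measure_mono_null hsub ?_
    apply measure_limsup_atTop_eq_zero
    set r : ℝ := (2:ℝ) ^ (s-1) with hrdef
    have hr0 : 0 ≤ r := Real.rpow_nonneg (by norm_num) _
    have hr1 : r < 1 := Real.rpow_lt_one_of_one_lt_of_neg (by norm_num) (by linarith)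
    have hsummable : Summable (fun n : ℕ => d [] * r ^ n) :=
      (summable_geometric_of_lt_one hr0 hr1).mul_left _
    have hle : ∑' n, μ (A n) ≤ ∑' n, ENNReal.ofReal (d [] * r ^ n) :=
      ENNReal.tsum_le_tsum fun n => measure_A_le s d hnonneg hsuper μ hμ n
    have heq : ∑' n, ENNReal.ofReal (d [] * r ^ n)
        = ENNReal.ofReal (∑' n, d [] * r ^ n) :=
      (ENNReal.ofReal_tsum_of_nonneg (fun n => mul_nonneg (hnonneg []) (pow_nonneg hr0 n)) hsummable).symm
    rw [heq] at hle
    exact (lt_of_le_of_lt hle ENNReal.ofReal_lt_top).ne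
end
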